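/- Let ν(v) := v(x̄) for a fixed state x̄, and suppose P(x̄|x,a) > 0 for all state-action pairs (x,a), and the loss ℓ has slopes in [ε₁, L₁] with ε₁ > 0. Then the shortfall-risk map R(v|x,a) := SR_{P(·|x,a)}(v) satisfies the Doeblin-type condition: there exists ᾱ ∈ (0,1) (any ᾱ < (ε₁/L₁)·min_{(x,a)} P(x̄|x,a)) such that for all v ≥ w pointwise and all (x,a), R(v|x,a) − ᾱ·ν(v) − R(w|x,a) + ᾱ·ν(w) ≥ 0. -/

import Mathlib

open Finset

noncomputable def shortfallRisk {X : Type*} [Fintype X]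
    (μ : X → ℝ) (ℓ : ℝ → ℝ) (v : X → ℝ) : ℝ :=
  sInf {m : ℝ | ∑ y, μ y * ℓ (v y - m) ≤ 0}

/-!
Write `g_u(m) = ∑ μ y ℓ(u y - m)`, so that `SR(u)` is the infimum of `{m | g_u(m) ≤ 0}`.
The slope bounds make `m ↦ g_u(m)` decrease at rate at most `L₁`, and for `w ≤ v` they give
`g_v(m) - g_w(m) ≥ ε₁ μ(x̄) (v x̄ - w x̄)`. At any `m` with `g_v(m) ≤ 0` the function `g_w` has
therefore dropped from `g_w(SR w) ≥ 0` to at most `-ε₁ μ(x̄) (v x̄ - w x̄)`, which needs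
`m - SR(w) ≥ (ε₁ / L₁) μ(x̄) (v x̄ - w x̄)`; taking the infimum over such `m` bounds `SR(v) - SR(w)`.
-/

section Slope

variable {f : ℝ → ℝ} {s t : ℝ}

lemma mul_sub_le_sub_of_le_slope {c : ℝ} (h : ∀ x y, x ≠ y → c ≤ (f x - f y) / (x - y))
    (hst : s ≤ t) : c * (t - s) ≤ f t - f s := by
  rcases hst.eq_or_lt with rfl | hlt
  · simp
  · exact (le_div_iff₀ (sub_pos.2 hlt)).1 (h t s hlt.ne')

lemma sub_le_mul_sub_of_slope_le {C : ℝ} (h : ∀ x y, x ≠ y → (f x - f y) / (x - y) ≤ C)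
    (hst : s ≤ t) : f t - f s ≤ C * (t - s) := by
  rcases hst.eq_or_lt with rfl | hlt
  · simp
  · exact (div_le_iff₀ (sub_pos.2 hlt)).1 (h t s hlt.ne')

end Slope

section ShortfallRisk

variable {X : Type*} [Fintype X] {μ : X → ℝ} {ℓ : ℝ → ℝ}

def expectedLoss (μ : X → ℝ) (ℓ : ℝ → ℝ) (u : X → ℝ) (m : ℝ) : ℝ :=
  ∑ y, μ y * ℓ (u y - m)

lemma shortfallRisk_eq_sInf (u : X → ℝ) :
    shortfallRisk μ ℓ u = sInf {m | expectedLoss μ ℓ u m ≤ 0} :=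
  rfl

lemma expectedLoss_sub_expectedLoss (u v : X → ℝ) (m m' : ℝ) :
    expectedLoss μ ℓ u m - expectedLoss μ ℓ v m' =
      ∑ y, μ y * (ℓ (u y - m) - ℓ (v y - m')) := by
  simp only [expectedLoss, mul_sub, sum_sub_distrib]

lemma expectedLoss_sub_le (hμ0 : ∀ y, 0 ≤ μ y) (hμ1 : ∑ y, μ y = 1) {L : ℝ}
    (hup : ∀ s t, s ≤ t → ℓ t - ℓ s ≤ L * (t - s)) (u : X → ℝ) {m m' : ℝ} (hm : m ≤ m') :
    expectedLoss μ ℓ u m - expectedLoss μ ℓ u m' ≤ L * (m' - m) := by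
  rw [expectedLoss_sub_expectedLoss]
  calc ∑ y, μ y * (ℓ (u y - m) - ℓ (u y - m'))
      ≤ ∑ y, μ y * (L * (m' - m)) := sum_le_sum fun y _ =>
        mul_le_mul_of_nonneg_left (by simpa using hup (u y - m') (u y - m) (by linarith))
          (hμ0 y)
    _ = L * (m' - m) := by rw [← sum_mul, hμ1, one_mul]

lemma mul_mul_sub_le_expectedLoss_sub (hμ0 : ∀ y, 0 ≤ μ y) {ε : ℝ} (hε : 0 ≤ ε)
    (hlow : ∀ s t, s ≤ t → ε * (t - s) ≤ ℓ t - ℓ s) {v w : X → ℝ} (hwv : ∀ y, w y ≤ v y)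
    (z : X) (m : ℝ) :
    μ z * (ε * (v z - w z)) ≤ expectedLoss μ ℓ v m - expectedLoss μ ℓ w m := by
  have hterm : ∀ y, μ y * (ε * (v y - w y)) ≤ μ y * (ℓ (v y - m) - ℓ (w y - m)) := fun y =>
    mul_le_mul_of_nonneg_left (by simpa using hlow (w y - m) (v y - m) (by linarith [hwv y]))
      (hμ0 y)
  have hnonneg : ∀ y, 0 ≤ μ y * (ε * (v y - w y)) := fun y =>
    mul_nonneg (hμ0 y) (mul_nonneg hε (sub_nonneg.2 (hwv y)))
  rw [expectedLoss_sub_expectedLoss]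
  exact (hterm z).trans <|
    single_le_sum (fun y _ => (hnonneg y).trans (hterm y)) (mem_univ z)

lemma expectedLoss_sup'_nonpos [Nonempty X] (hμ0 : ∀ y, 0 ≤ μ y) (hℓ : Monotone ℓ)
    (hℓ0 : ℓ 0 = 0) (u : X → ℝ) : expectedLoss μ ℓ u (univ.sup' univ_nonempty u) ≤ 0 :=
  sum_nonpos fun y _ => mul_nonpos_of_nonneg_of_nonpos (hμ0 y)
    (hℓ0 ▸ hℓ (sub_nonpos.2 (le_sup' u (mem_univ y))))

lemma bddBelow_setOf_expectedLoss_nonpos [Nonempty X] (hμ0 : ∀ y, 0 ≤ μ y) {z : X}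
    (hz : 0 < μ z) (hℓ : StrictMono ℓ) (hℓ0 : ℓ 0 = 0) (u : X → ℝ) :
    BddBelow {m | expectedLoss μ ℓ u m ≤ 0} := by
  refine ⟨univ.inf' univ_nonempty u, fun m (hm : expectedLoss μ ℓ u m ≤ 0) => ?_⟩
  by_contra! hlt
  have hinf : ∀ y, m < u y := fun y => hlt.trans_le (inf'_le u (mem_univ y))
  have hterm : ∀ y, 0 ≤ μ y * ℓ (u y - m) := fun y =>
    mul_nonneg (hμ0 y) (hℓ0 ▸ hℓ.monotone (sub_nonneg.2 (hinf y).le))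
  have hzterm : 0 < μ z * ℓ (u z - m) := mul_pos hz (hℓ0 ▸ hℓ (sub_pos.2 (hinf z)))
  exact hm.not_gt (hzterm.trans_le (single_le_sum (fun y _ => hterm y) (mem_univ z)))

/-- If `g_u` were negative at `SR(u)`, its Lipschitz bound would keep it nonpositive a little
to the left of `SR(u)`, contradicting the infimum. -/
lemma expectedLoss_shortfallRisk_nonneg (hμ0 : ∀ y, 0 ≤ μ y) (hμ1 : ∑ y, μ y = 1) {L : ℝ}
    (hL : 0 < L) (hup : ∀ s t, s ≤ t → ℓ t - ℓ s ≤ L * (t - s)) {u : X → ℝ}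
    (hbdd : BddBelow {m | expectedLoss μ ℓ u m ≤ 0}) :
    0 ≤ expectedLoss μ ℓ u (shortfallRisk μ ℓ u) := by
  set r := shortfallRisk μ ℓ u with hr
  set g := expectedLoss μ ℓ u r
  by_contra! hneg
  have hlt : r + g / L < r := by linarith [div_neg_of_neg_of_pos hneg hL]
  have hmem : expectedLoss μ ℓ u (r + g / L) ≤ 0 := by
    have hlip := expectedLoss_sub_le hμ0 hμ1 hup u hlt.le
    rw [show L * (r - (r + g / L)) = -g by field_simp; ring] at hlip
    linarith
  exact hlt.not_ge (hr ▸ csInf_le hbdd hmem)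

theorem mul_sub_le_shortfallRisk_sub [Nonempty X] (hμ0 : ∀ y, 0 ≤ μ y)
    (hμ1 : ∑ y, μ y = 1) {z : X} (hz : 0 < μ z) (hℓ : StrictMono ℓ) (hℓ0 : ℓ 0 = 0)
    {ε L : ℝ} (hε : 0 ≤ ε) (hL : 0 < L) (hlow : ∀ s t, s ≤ t → ε * (t - s) ≤ ℓ t - ℓ s)
    (hup : ∀ s t, s ≤ t → ℓ t - ℓ s ≤ L * (t - s)) {v w : X → ℝ} (hwv : ∀ y, w y ≤ v y) :
    ε / L * μ z * (v z - w z) ≤ shortfallRisk μ ℓ v - shortfallRisk μ ℓ w := by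
  have hbdd := bddBelow_setOf_expectedLoss_nonpos hμ0 hz hℓ hℓ0
  set r := shortfallRisk μ ℓ w
  suffices hbound : ∀ m ∈ {m | expectedLoss μ ℓ v m ≤ 0}, r + ε / L * μ z * (v z - w z) ≤ m by
    have hne : Set.Nonempty {m | expectedLoss μ ℓ v m ≤ 0} :=
      ⟨_, expectedLoss_sup'_nonpos hμ0 hℓ.monotone hℓ0 v⟩
    linarith [le_csInf hne hbound, shortfallRisk_eq_sInf (μ := μ) (ℓ := ℓ) v]
  intro m (hm : expectedLoss μ ℓ v m ≤ 0)
  have hcmp := mul_mul_sub_le_expectedLoss_sub hμ0 hε hlow hwv z m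
  have hgap : 0 ≤ μ z * (ε * (v z - w z)) :=
    mul_nonneg hz.le (mul_nonneg hε (sub_nonneg.2 (hwv z)))
  have hrm : r ≤ m := csInf_le (hbdd w) (show expectedLoss μ ℓ w m ≤ 0 by linarith)
  have hlip := expectedLoss_sub_le hμ0 hμ1 hup w hrm
  have hr := expectedLoss_shortfallRisk_nonneg hμ0 hμ1 hL hup (hbdd w)
  calc r + ε / L * μ z * (v z - w z) = r + μ z * (ε * (v z - w z)) / L := by ring
    _ ≤ m := by
      have : μ z * (ε * (v z - w z)) / L ≤ m - r := by rw [div_le_iff₀ hL]; linarith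
      linarith

end ShortfallRisk

theorem stmt_12 {X A : Type*} [Fintype X] [Fintype A] [Nonempty X] [Nonempty A]
    (P : X → A → X → ℝ)
    (hP0 : ∀ x a y, 0 ≤ P x a y) (hP1 : ∀ x a, ∑ y, P x a y = 1)
    (ℓ : ℝ → ℝ) (hℓ0 : ℓ 0 = 0) (hinc : StrictMono ℓ)
    (ε₁ L₁ : ℝ) (hε : 0 < ε₁)
    (hslope : ∀ x y : ℝ, x ≠ y → ε₁ ≤ (ℓ x - ℓ y) / (x - y) ∧ (ℓ x - ℓ y) / (x - y) ≤ L₁)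
    (xbar : X) (hxbar : ∀ x a, 0 < P x a xbar) :
    ∀ α : ℝ, 0 < α →
      α < (ε₁ / L₁) * (univ.inf' univ_nonempty (fun p : X × A => P p.1 p.2 xbar)) →
      ∀ v w : X → ℝ, (∀ y, w y ≤ v y) → ∀ x a,
        0 ≤ shortfallRisk (P x a) ℓ v - α * v xbar
              - shortfallRisk (P x a) ℓ w + α * w xbar := by
  intro α _ hαlt v w hwv x a
  have hlow : ∀ s t : ℝ, s ≤ t → ε₁ * (t - s) ≤ ℓ t - ℓ s := fun _ _ =>
    mul_sub_le_sub_of_le_slope fun x y hxy => (hslope x y hxy).1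
  have hup : ∀ s t : ℝ, s ≤ t → ℓ t - ℓ s ≤ L₁ * (t - s) := fun _ _ =>
    sub_le_mul_sub_of_slope_le fun x y hxy => (hslope x y hxy).2
  have hL : 0 < L₁ := by
    linarith [(hlow 0 1 zero_le_one).trans (hup 0 1 zero_le_one)]
  have hαle : α ≤ ε₁ / L₁ * P x a xbar := hαlt.le.trans <|
    mul_le_mul_of_nonneg_left (inf'_le _ (mem_univ (x, a))) (by positivity)
  have hkey := mul_sub_le_shortfallRisk_sub (hP0 x a) (hP1 x a) (hxbar x a) hinc hℓ0 hε.le hL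
    hlow hup hwv
  nlinarith [mul_le_mul_of_nonneg_right hαle (sub_nonneg.2 (hwv xbar))]
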